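/- Let Θ be an inner function with values in L(E), let Θ̃(z) = Θ(z̄)*, and let τ be the unitary operator from K_Θ onto K_Θ̃ given by (τf)(e^{it}) = e^{-it} Θ(e^{-it})* f(e^{-it}). If f ∈ K_Θ̃ is orthogonal to D̃_* = {(1/z)(Θ̃(z) − Θ̃(0))x : x ∈ E}, then τ*f ∈ K_Θ is orthogonal to D = {(I − Θ(z)Θ(0)*)x : x ∈ E}. -/

import Mathlib

open MeasureTheory Complex ContinuousLinearMap
open scoped ComplexInnerProductSpace

noncomputable section

/-- The circle `𝕋`, realized as `ℝ / 2πℤ`; the point `t` corresponds to `e^{it}`. -/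
abbrev Circle2pi : Type := AddCircle (2 * Real.pi)

instance : Fact (0 < 2 * Real.pi) := ⟨by positivity⟩

/-- Normalized Haar (arc-length) measure on the circle. -/
abbrev haarCircle2pi : Measure Circle2pi := AddCircle.haarAddCircle

variable {E : Type} [NormedAddCommGroup E] [InnerProductSpace ℂ E] [FiniteDimensional ℂ E]

/-- `Θ`, given by its boundary-value function on the circle, is an inner function: it is
(a.e. strongly) measurable, its boundary values are a.e. unitary operators on `E`, and its
Fourier coefficients of negative index vanish (the latter says exactly that `Θ` is the
boundary-value function of a bounded analytic `L(E)`-valued function on the unit disc,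
i.e. an element of `H^∞(L(E))`). -/
structure IsInner (Θ : Circle2pi → (E →L[ℂ] E)) : Prop where
  meas : AEStronglyMeasurable Θ haarCircle2pi
  unit : ∀ᵐ t ∂haarCircle2pi, Θ t ∈ unitary (E →L[ℂ] E)
  anal : ∀ n : ℤ, n < 0 → fourierCoeff Θ n = 0

/-- Membership in the Hardy space `H²(E)`, viewed as the subspace of `L²(E)` of functions
whose Fourier coefficients of negative index vanish. -/
def MemH2 (f : Lp E 2 haarCircle2pi) : Prop :=
  ∀ n : ℤ, n < 0 → fourierCoeff (⇑f) n = 0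

/-- Membership in the model space `K_Θ = H²(E) ⊖ Θ H²(E)`: `f` belongs to `H²(E)` and is
orthogonal to `Θ H²(E)`. -/
def MemK (Θ : Circle2pi → (E →L[ℂ] E)) (f : Lp E 2 haarCircle2pi) : Prop :=
  MemH2 f ∧ ∀ g : Lp E 2 haarCircle2pi, MemH2 g →
    ∫ t, ⟪f t, Θ t (g t)⟫ ∂haarCircle2pi = 0

/-- The boundary values of `Θ̃(z) = Θ(z̄)*`, namely `Θ̃(e^{it}) = Θ(e^{-it})*`. -/
def tild (Θ : Circle2pi → (E →L[ℂ] E)) : Circle2pi → (E →L[ℂ] E) :=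
  fun t => adjoint (Θ (-t))

/-- `τ` is the operator on `L²(E)` given by `(τ f)(e^{it}) = e^{-it} Θ(e^{-it})* f(e^{-it})`. -/
def IsTau (Θ : Circle2pi → (E →L[ℂ] E))
    (τ : Lp E 2 haarCircle2pi →L[ℂ] Lp E 2 haarCircle2pi) : Prop :=
  ∀ f : Lp E 2 haarCircle2pi,
    (⇑(τ f)) =ᵐ[haarCircle2pi] fun t => fourier (-1) t • (adjoint (Θ (-t))) (f (-t))

/-- `P` is the orthogonal projection of `L²(E)` onto the model space `K_Θ`:
its range lies in `K_Θ`, it fixes `K_Θ`, and `f - P f` is orthogonal to `K_Θ`. -/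
def IsProjK (Θ : Circle2pi → (E →L[ℂ] E))
    (P : Lp E 2 haarCircle2pi →L[ℂ] Lp E 2 haarCircle2pi) : Prop :=
  (∀ f, MemK Θ (P f)) ∧ (∀ f, MemK Θ f → P f = f) ∧
    ∀ f g, MemK Θ g → ⟪f - P f, g⟫ = 0

/-- `S` acts on the model space `K_Θ` as the compressed shift `S_Θ f = P_Θ (z f)`:
for `f ∈ K_Θ`, `S f ∈ K_Θ` and `S f - z f` is orthogonal to `K_Θ`, i.e.
`⟪S f, g⟫ = ⟪z f, g⟫` for all `g ∈ K_Θ`. -/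
def IsCompShift (Θ : Circle2pi → (E →L[ℂ] E))
    (S : Lp E 2 haarCircle2pi →L[ℂ] Lp E 2 haarCircle2pi) : Prop :=
  ∀ f, MemK Θ f → MemK Θ (S f) ∧
    ∀ g, MemK Θ g → ⟪S f, g⟫ = ∫ t, ⟪fourier 1 t • f t, g t⟫ ∂haarCircle2pi

/-- `A` acts on the model space `K_Θ` as the adjoint `S_Θ*` of the compressed shift `S`:
for `f ∈ K_Θ`, `A f ∈ K_Θ` and `⟪A f, g⟫ = ⟪f, S g⟫` for all `g ∈ K_Θ`. -/
def IsCompShiftAdj (Θ : Circle2pi → (E →L[ℂ] E))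
    (S A : Lp E 2 haarCircle2pi →L[ℂ] Lp E 2 haarCircle2pi) : Prop :=
  ∀ f, MemK Θ f → MemK Θ (A f) ∧ ∀ g, MemK Θ g → ⟪A f, g⟫ = ⟪f, S g⟫

/-- The subspace `D = {(I - Θ(z) Θ(0)*) x : x ∈ E}` of `K_Θ`, described through boundary
values; here `Θ(0)` is the 0-th Fourier coefficient of `Θ`. -/
def DSet (Θ : Circle2pi → (E →L[ℂ] E)) : Set (Lp E 2 haarCircle2pi) :=
  {f | ∃ x : E, (⇑f) =ᵐ[haarCircle2pi]
    fun t => x - Θ t (adjoint (fourierCoeff Θ 0) x)}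

/-- The subspace `D_* = {(1/z)(Θ(z) - Θ(0)) x : x ∈ E}` of `K_Θ`, described through
boundary values. -/
def DStarSet (Θ : Circle2pi → (E →L[ℂ] E)) : Set (Lp E 2 haarCircle2pi) :=
  {f | ∃ x : E, (⇑f) =ᵐ[haarCircle2pi]
    fun t => fourier (-1) t • (Θ t x - fourierCoeff Θ 0 x)}

/-- `A` is a matrix-valued truncated Toeplitz operator on `K_Θ`, i.e. `A ∈ T_Θ`: there is a
symbol `Φ ∈ L²(L(E))` such that `A f = P_Θ (Φ f)` for every `f` in
`K_Θ^∞ = K_Θ ∩ H^∞(E)`; the compression is expressed by: `A f ∈ K_Θ` and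
`⟪A f, g⟫ = ⟪Φ f, g⟫` for every `g ∈ K_Θ`. -/
def MemTT (Θ : Circle2pi → (E →L[ℂ] E))
    (A : Lp E 2 haarCircle2pi →L[ℂ] Lp E 2 haarCircle2pi) : Prop :=
  ∃ Φ : Circle2pi → (E →L[ℂ] E), MemLp Φ 2 haarCircle2pi ∧
    ∀ f, MemK Θ f → MemLp (⇑f) ⊤ haarCircle2pi →
      MemK Θ (A f) ∧ ∀ g, MemK Θ g → ⟪A f, g⟫ = ∫ t, ⟪Φ t (f t), g t⟫ ∂haarCircle2pi

/-! Everything is transported through `⟪τ* f, g⟫ = ⟪f, τ g⟫`.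
`τ` sends the monomial `zⁿ x` to `Θ̃ z^{-n-1} x`, which lies in `Θ̃ H²` when `n < 0`; so `f ⊥ Θ̃ H²`
kills the negative Fourier coefficients of `τ* f`. As `Θ` is unitary on the circle,
`τ (Θ g) (e^{it}) = e^{-it} g(e^{-it})`, whose spectrum lies in the negative integers when `g ∈ H²`,
so it is orthogonal to `f ∈ H²`. Finally `τ` maps `(I - Θ Θ(0)*) x` to `z̄ (Θ̃ - Θ̃(0)) x ∈ D̃_*`,
because `Θ̃(0) = Θ(0)*`. -/

theorem ae_comp_neg {G : Type*} [MeasurableSpace G] [Neg G] [MeasurableNeg G] {μ : Measure G}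
    [μ.IsNegInvariant] {p : G → Prop} (h : ∀ᵐ t ∂μ, p t) : ∀ᵐ t ∂μ, p (-t) :=
  (Measure.measurePreserving_neg μ).quasiMeasurePreserving.ae h

section FourierCoeff

open AddCircle ComplexConjugate

theorem fourier_apply_neg {T : ℝ} (n : ℤ) (t : AddCircle T) :
    fourier n (-t) = fourier (-n) t := by
  rw [fourier_apply, fourier_apply, smul_neg, neg_smul]

variable {T : ℝ} [Fact (0 < T)]

section NormedSpace

variable {F : Type*} [NormedAddCommGroup F] [NormedSpace ℂ F]

theorem fourierCoeff_comp_neg (G : AddCircle T → F) (n : ℤ) :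
    fourierCoeff (fun t => G (-t)) n = fourierCoeff G (-n) := by
  rw [fourierCoeff, ← integral_neg_eq_self, fourierCoeff]
  simp only [neg_neg, fourier_apply_neg]

theorem fourierCoeff_fourier_smul (k : ℤ) (G : AddCircle T → F) (n : ℤ) :
    fourierCoeff (fun t => fourier k t • G t) n = fourierCoeff G (n - k) := by
  simp_rw [fourierCoeff, smul_smul, ← fourier_add, neg_sub, sub_eq_neg_add]

theorem fourierCoeff_fourier_smul_const [CompleteSpace F] (m : ℤ) (x : F) (n : ℤ) :
    fourierCoeff (fun t : AddCircle T => fourier m t • x) n = if n = m then x else 0 := by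
  have := congr_fun (fourierCoeff_fourier (T := T) m) n
  simp_rw [fourierCoeff, smul_eq_mul] at this
  simp_rw [fourierCoeff, smul_smul, integral_smul_const, this, Pi.single_apply]
  split_ifs <;> simp

theorem ContinuousLinearMap.fourierCoeff_comp {F' : Type*} [NormedAddCommGroup F']
    [NormedSpace ℂ F'] [CompleteSpace F] [CompleteSpace F'] (L : F →L[ℂ] F')
    {G : AddCircle T → F} (hG : Integrable G haarAddCircle) (n : ℤ) :
    fourierCoeff (fun t => L (G t)) n = L (fourierCoeff G n) := by
  simp_rw [fourierCoeff, ← L.map_smul, L.integral_comp_comm (hG.fourier_smul _)]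

theorem memLp_fourier_smul_const (m : ℤ) (x : F) :
    MemLp (fun t : AddCircle T => fourier m t • x) 2 haarAddCircle :=
  MemLp.of_bound ((map_continuous (fourier m)).smul continuous_const).aestronglyMeasurable ‖x‖
    (ae_of_all _ fun t => by rw [norm_smul, fourier_apply, Circle.norm_coe, one_mul])

end NormedSpace

theorem inner_eq_tsum_fourierCoeff (φ ψ : Lp ℂ 2 (haarAddCircle (T := T))) :
    ⟪φ, ψ⟫ = ∑' n, conj (fourierCoeff φ n) * fourierCoeff ψ n := by
  rw [← fourierBasis.tsum_inner_mul_inner]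
  congr with n
  rw [← inner_conj_symm, ← fourierBasis.repr_apply_apply, ← fourierBasis.repr_apply_apply,
    fourierBasis_repr, fourierBasis_repr]

variable {H : Type*} [NormedAddCommGroup H] [InnerProductSpace ℂ H]

theorem inner_eq_zero_of_fourierCoeff_eq_zero_or [FiniteDimensional ℂ H]
    (F G : Lp H 2 (haarAddCircle (T := T)))
    (h : ∀ n, fourierCoeff F n = 0 ∨ fourierCoeff G n = 0) : ⟪F, G⟫ = 0 := by
  let b := stdOrthonormalBasis ℂ H
  let coord (i) : Lp H 2 (haarAddCircle (T := T)) →L[ℂ] Lp ℂ 2 haarAddCircle :=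
    (innerSL ℂ (b i)).compLpL 2 haarAddCircle
  have coeFn_coord (i) (F : Lp H 2 (haarAddCircle (T := T))) :
      coord i F =ᵐ[haarAddCircle] fun t => ⟪b i, F t⟫ :=
    (innerSL ℂ (b i)).coeFn_compLp F
  have fourierCoeff_coord (i) (F : Lp H 2 (haarAddCircle (T := T))) (n : ℤ) :
      fourierCoeff (coord i F) n = ⟪b i, fourierCoeff F n⟫ := by
    rw [fourierCoeff_congr_ae (coeFn_coord i F)]
    exact (innerSL ℂ (b i)).fourierCoeff_comp ((Lp.memLp F).integrable one_le_two) n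
  have inner_eq_sum : ⟪F, G⟫ = ∑ i, ⟪coord i F, coord i G⟫ := by
    simp_rw [L2.inner_def]
    rw [← integral_finsetSum _ fun i _ => L2.integrable_inner (coord i F) (coord i G)]
    refine integral_congr_ae ?_
    filter_upwards [ae_all_iff.2 fun i => coeFn_coord i F, ae_all_iff.2 fun i => coeFn_coord i G]
      with t hF hG
    simp only [hF, hG, RCLike.inner_apply, inner_conj_symm, mul_comm, b.sum_inner_mul_inner]
  rw [inner_eq_sum]
  refine Finset.sum_eq_zero fun i _ => ?_
  rw [inner_eq_tsum_fourierCoeff]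
  refine (tsum_congr fun n => ?_).trans tsum_zero
  rcases h n with h0 | h0 <;> simp [fourierCoeff_coord, h0]

def fourierMonomialLp (m : ℤ) (x : H) : Lp H 2 (haarAddCircle (T := T)) :=
  (memLp_fourier_smul_const m x).toLp _

theorem coeFn_fourierMonomialLp (m : ℤ) (x : H) :
    fourierMonomialLp (T := T) m x =ᵐ[haarAddCircle] fun t => fourier m t • x :=
  (memLp_fourier_smul_const m x).coeFn_toLp

theorem inner_fourierMonomialLp [CompleteSpace H] (F : Lp H 2 (haarAddCircle (T := T))) (m : ℤ)
    (x : H) : ⟪F, fourierMonomialLp m x⟫ = ⟪fourierCoeff F m, x⟫ :=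
  calc ⟪F, fourierMonomialLp m x⟫ = ∫ t, ⟪F t, fourier m t • x⟫ ∂haarAddCircle := by
        rw [L2.inner_def]
        exact integral_congr_ae ((coeFn_fourierMonomialLp m x).mono fun t ht => by simp only [ht])
    _ = ∫ t, conj ⟪x, fourier (-m) t • F t⟫ ∂haarAddCircle := by
        simp only [inner_smul_right, inner_conj_symm, fourier_neg, map_mul, conj_conj]
    _ = ⟪fourierCoeff F m, x⟫ := by
        rw [integral_conj, integral_inner ((Lp.memLp F).integrable one_le_two |>.fourier_smul _),
          inner_conj_symm, fourierCoeff]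

end FourierCoeff

theorem adjoint_apply_apply_of_mem_unitary {H : Type*} [NormedAddCommGroup H]
    [InnerProductSpace ℂ H] [CompleteSpace H] {u : H →L[ℂ] H} (hu : u ∈ unitary (H →L[ℂ] H))
    (y : H) : adjoint u (u y) = y := by
  simpa [star_eq_adjoint] using DFunLike.congr_fun (Unitary.star_mul_self_of_mem hu) y

section ModelSpace

variable {Θ : Circle2pi → (E →L[ℂ] E)} {τ : Lp E 2 haarCircle2pi →L[ℂ] Lp E 2 haarCircle2pi}

theorem IsInner.integrable (hΘ : IsInner Θ) : Integrable Θ haarCircle2pi :=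
  .of_bound hΘ.meas 1 <| hΘ.unit.mono fun _ ht =>
    opNorm_le_bound _ zero_le_one fun y => by rw [norm_map_of_mem_unitary ht, one_mul]

theorem IsInner.memLp_apply (hΘ : IsInner Θ) {G : Circle2pi → E}
    (hG : MemLp G 2 haarCircle2pi) : MemLp (fun t => Θ t (G t)) 2 haarCircle2pi :=
  .of_le hG ((ContinuousLinearMap.apply ℂ E).flip.aestronglyMeasurable_comp₂ hΘ.meas hG.1) <|
    hΘ.unit.mono fun _ ht => (norm_map_of_mem_unitary ht _).le

theorem fourierCoeff_tild_zero (hΘ : Integrable Θ haarCircle2pi) :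
    fourierCoeff (tild Θ) 0 = adjoint (fourierCoeff Θ 0) := by
  simp only [fourierCoeff, neg_zero, fourier_zero, one_smul, tild]
  rw [integral_neg_eq_self (fun t => adjoint (Θ t))]
  exact integral_comp_commSL (by simp) adjoint.toContinuousLinearEquiv.toContinuousLinearMap hΘ

theorem memH2_fourierMonomialLp {m : ℤ} (hm : 0 ≤ m) (x : E) :
    MemH2 (fourierMonomialLp m x) := fun n hn => by
  rw [fourierCoeff_congr_ae (coeFn_fourierMonomialLp m x), fourierCoeff_fourier_smul_const,
    if_neg (by omega)]

theorem IsTau.apply_ae (hτ : IsTau Θ τ) {g : Lp E 2 haarCircle2pi} {G : Circle2pi → E}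
    (hg : g =ᵐ[haarCircle2pi] G) :
    τ g =ᵐ[haarCircle2pi] fun t => fourier (-1) t • adjoint (Θ (-t)) (G (-t)) :=
  (hτ g).trans <| (ae_comp_neg hg).mono fun t ht => by simp only [ht]

theorem IsTau.apply_fourierMonomialLp (hτ : IsTau Θ τ) (n : ℤ) (x : E) :
    τ (fourierMonomialLp n x) =ᵐ[haarCircle2pi]
      fun t => tild Θ t (fourierMonomialLp (-(n + 1)) x t) := by
  filter_upwards [hτ.apply_ae (coeFn_fourierMonomialLp n x),
    coeFn_fourierMonomialLp (-(n + 1)) x] with t hτt hmt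
  rw [hτt, hmt, tild, fourier_apply_neg, map_smul, map_smul, smul_smul, ← fourier_add,
    show -1 + -n = -(n + 1) by ring]

theorem IsTau.apply_toLp_Theta_mul (hΘ : IsInner Θ) (hτ : IsTau Θ τ) (g : Lp E 2 haarCircle2pi) :
    τ ((hΘ.memLp_apply (Lp.memLp g)).toLp _) =ᵐ[haarCircle2pi]
      fun t => fourier (-1) t • g (-t) := by
  filter_upwards [hτ.apply_ae (hΘ.memLp_apply (Lp.memLp g)).coeFn_toLp, ae_comp_neg hΘ.unit]
    with t hτt hu
  rw [hτt, adjoint_apply_apply_of_mem_unitary hu]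

theorem IsTau.memH2_adjoint_apply (hτ : IsTau Θ τ) {f : Lp E 2 haarCircle2pi}
    (hf : MemK (tild Θ) f) : MemH2 (adjoint τ f) := fun n hn => by
  refine ext_inner_right ℂ fun x => ?_
  rw [← inner_fourierMonomialLp, adjoint_inner_left, inner_zero_left, L2.inner_def,
    ← hf.2 _ (memH2_fourierMonomialLp (m := -(n + 1)) (by omega) x)]
  exact integral_congr_ae <| (hτ.apply_fourierMonomialLp n x).mono fun t ht => by simp only [ht]

theorem IsTau.integral_inner_adjoint_apply_eq_zero (hΘ : IsInner Θ) (hτ : IsTau Θ τ)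
    {f g : Lp E 2 haarCircle2pi} (hf : MemH2 f) (hg : MemH2 g) :
    ∫ t, ⟪adjoint τ f t, Θ t (g t)⟫ ∂haarCircle2pi = 0 := by
  have hΘg := hΘ.memLp_apply (Lp.memLp g)
  have : ∫ t, ⟪adjoint τ f t, Θ t (g t)⟫ ∂haarCircle2pi = ⟪adjoint τ f, hΘg.toLp _⟫ := by
    rw [L2.inner_def]
    exact integral_congr_ae <| hΘg.coeFn_toLp.mono fun t ht => by simp only [ht]
  rw [this, adjoint_inner_left]
  refine inner_eq_zero_of_fourierCoeff_eq_zero_or _ _ fun n => ?_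
  rcases lt_or_ge n 0 with hn | hn
  · exact .inl (hf n hn)
  · right
    rw [fourierCoeff_congr_ae (hτ.apply_toLp_Theta_mul hΘ g), fourierCoeff_fourier_smul,
      fourierCoeff_comp_neg]
    exact hg _ (by omega)

theorem IsTau.mapsTo_DSet (hΘ : IsInner Θ) (hτ : IsTau Θ τ) :
    Set.MapsTo τ (DSet Θ) (DStarSet (tild Θ)) := by
  rintro g ⟨x, hx⟩
  refine ⟨x, (hτ.apply_ae hx).trans ?_⟩
  filter_upwards [ae_comp_neg hΘ.unit] with t hu
  rw [map_sub, adjoint_apply_apply_of_mem_unitary hu, fourierCoeff_tild_zero hΘ.integrable, tild]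

end ModelSpace

/-- Let `Θ` be inner, `Θ̃(z) = Θ(z̄)*`, and `τ` the unitary operator
`(τ f)(e^{it}) = e^{-it} Θ(e^{-it})* f(e^{-it})`. If `f ∈ K_Θ̃` is orthogonal to
`D̃_* = {(1/z)(Θ̃(z) - Θ̃(0)) x : x ∈ E}`, then `τ* f ∈ K_Θ` is orthogonal to
`D = {(I - Θ(z) Θ(0)*) x : x ∈ E}`. -/
theorem tau_adj_of_orth_DTildStar (Θ : Circle2pi → (E →L[ℂ] E)) (hΘ : IsInner Θ)
    (τ : Lp E 2 haarCircle2pi →L[ℂ] Lp E 2 haarCircle2pi) (hτ : IsTau Θ τ)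
    (f : Lp E 2 haarCircle2pi) (hf : MemK (tild Θ) f)
    (hfD : ∀ g ∈ DStarSet (tild Θ), ⟪f, g⟫ = (0 : ℂ)) :
    MemK Θ (adjoint τ f) ∧ ∀ g ∈ DSet Θ, ⟪adjoint τ f, g⟫ = (0 : ℂ) :=
  ⟨⟨hτ.memH2_adjoint_apply hf, fun _ hg => hτ.integral_inner_adjoint_apply_eq_zero hΘ hf.1 hg⟩,
    fun g hg => by rw [adjoint_inner_left]; exact hfD _ (hτ.mapsTo_DSet hΘ hg)⟩
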